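/- arXiv:hep-th/0201085 — 12 statements merged into one kernel-verified Lean document; each statement's English description precedes it below -/
import Mathlib

section
/- Suppose G is a Q-resolvent of the symmetric matrix L, and suppose the conjugate of P equals P and Im L := (L - L*)/(2i) is positive semidefinite (where L* is the conjugate transpose). Then Im L_eff is positive semidefinite, where L_eff := PᵀLP - PᵀLGLP. -/
open Matrix ComplexOrder

theorem stmt_5 {n m : ℕ} (P : Matrix (Fin n) (Fin m) ℂ)
    (hP : IsUnit (Pᵀ * P).det) (hPreal : P.map (starRingEnd ℂ) = P)
    (Q : Matrix (Fin n) (Fin n) ℂ) (hQ : Q = 1 - P * ((Pᵀ * P)⁻¹ * Pᵀ))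
    (L G : Matrix (Fin n) (Fin n) ℂ) (hL : Lᵀ = L)
    (hImL : ((2 * Complex.I)⁻¹ • (L - Lᴴ)).PosSemidef)
    (hGsym : Gᵀ = G) (hGP : G * P = 0) (hGLQ : G * L * Q = Q) :
    ((2 * Complex.I)⁻¹ • ((Pᵀ * L * P - Pᵀ * L * G * L * P) -
      (Pᵀ * L * P - Pᵀ * L * G * L * P)ᴴ)).PosSemidef := by
  -- P is real
  have hPH : Pᴴ = Pᵀ := by
    ext i j
    have := congrFun (congrFun hPreal j) i
    simpa [conjTranspose_apply, Matrix.map_apply] using this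
  have hPtH : (Pᵀ)ᴴ = P := by
    ext i j
    have := congrFun (congrFun hPreal i) j
    simpa [conjTranspose_apply, Matrix.map_apply] using this
  -- transpose/conjTranspose of Q
  have hPPT : (Pᵀ * P)ᵀ = Pᵀ * P := by
    rw [transpose_mul, transpose_transpose]
  have hPPH : (Pᵀ * P)ᴴ = Pᵀ * P := by
    rw [conjTranspose_mul, hPH, hPtH]
  have hQT : Qᵀ = Q := by
    rw [hQ, transpose_sub, transpose_one, transpose_mul, transpose_mul,
      transpose_transpose, transpose_nonsing_inv, hPPT, Matrix.mul_assoc]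
  have hQH : Qᴴ = Q := by
    rw [hQ, conjTranspose_sub, conjTranspose_one, conjTranspose_mul, conjTranspose_mul,
      hPH, hPtH, conjTranspose_nonsing_inv, hPPH, Matrix.mul_assoc]
  -- P-type annihilation
  have hPtG : Pᵀ * G = 0 := by
    have : (G * P)ᵀ = (0 : Matrix (Fin m) (Fin n) ℂ) := by rw [hGP, transpose_zero]
    rwa [transpose_mul, hGsym] at this
  have hQG : Q * G = G := by
    rw [hQ, Matrix.sub_mul, Matrix.one_mul, Matrix.mul_assoc, Matrix.mul_assoc, hPtG,
      Matrix.mul_zero, Matrix.mul_zero, sub_zero]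
  have hGQ : G * Q = G := by
    rw [hQ, Matrix.mul_sub, Matrix.mul_one, ← Matrix.mul_assoc, hGP, Matrix.zero_mul, sub_zero]
  have hGHQ : Gᴴ * Q = Gᴴ := by
    have : (Q * G)ᴴ = Gᴴ := by rw [hQG]
    rwa [conjTranspose_mul, hQH] at this
  -- transposed resolvent identity
  have hQLG : Q * L * G = Q := by
    have h := congrArg Matrix.transpose hGLQ
    simp only [transpose_mul, hQT, hGsym, hL] at h
    rwa [← Matrix.mul_assoc] at h
  -- conjugated resolvent identity
  have hGHLHQ : Gᴴ * Lᴴ * Q = Q := by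
    have h := congrArg Matrix.conjTranspose hQLG
    simp only [conjTranspose_mul, hQH] at h
    rwa [← Matrix.mul_assoc] at h
  -- key identities
  have h1 : Gᴴ * Lᴴ * G = G := by
    calc Gᴴ * Lᴴ * G = Gᴴ * Lᴴ * (Q * G) := by rw [hQG]
    _ = Gᴴ * Lᴴ * Q * G := by simp only [Matrix.mul_assoc]
    _ = Q * G := by rw [hGHLHQ]
    _ = G := hQG
  have h2 : Gᴴ * L * G = Gᴴ := by
    calc Gᴴ * L * G = Gᴴ * Q * L * G := by rw [hGHQ]
    _ = Gᴴ * (Q * L * G) := by simp only [Matrix.mul_assoc]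
    _ = Gᴴ * Q := by rw [hQLG]
    _ = Gᴴ := hGHQ
  -- master identity
  have hmaster : (1 - Lᴴ * Gᴴ) * (L - Lᴴ) * (1 - G * L)
      = (L - L * G * L) - (Lᴴ - Lᴴ * Gᴴ * Lᴴ) := by
    calc (1 - Lᴴ * Gᴴ) * (L - Lᴴ) * (1 - G * L)
        = ((L - L * G * L) - (Lᴴ - Lᴴ * Gᴴ * Lᴴ)) + Lᴴ * G * L - Lᴴ * Gᴴ * L
          + Lᴴ * (Gᴴ * L * G) * L - Lᴴ * (Gᴴ * Lᴴ * G) * L := by noncomm_ring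
    _ = (L - L * G * L) - (Lᴴ - Lᴴ * Gᴴ * Lᴴ) := by rw [h1, h2]; noncomm_ring
  -- rewrite the target as a congruence
  have hLeffH : (Pᵀ * L * P - Pᵀ * L * G * L * P)ᴴ
      = Pᵀ * Lᴴ * P - Pᵀ * (Lᴴ * Gᴴ * Lᴴ) * P := by
    rw [conjTranspose_sub]
    congr 1
    · rw [conjTranspose_mul, conjTranspose_mul, hPH, hPtH, Matrix.mul_assoc]
    · rw [conjTranspose_mul, conjTranspose_mul, conjTranspose_mul, conjTranspose_mul, hPH, hPtH]
      simp only [Matrix.mul_assoc]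
  have hKH : (P - G * L * P)ᴴ = Pᵀ - Pᵀ * (Lᴴ * Gᴴ) := by
    rw [conjTranspose_sub, conjTranspose_mul, conjTranspose_mul, hPH]
  have hsand : (Pᵀ * L * P - Pᵀ * L * G * L * P) - (Pᵀ * L * P - Pᵀ * L * G * L * P)ᴴ
      = (P - G * L * P)ᴴ * (L - Lᴴ) * (P - G * L * P) := by
    rw [hLeffH, hKH]
    have e1 : Pᵀ - Pᵀ * (Lᴴ * Gᴴ) = Pᵀ * (1 - Lᴴ * Gᴴ) := by
      rw [Matrix.mul_sub, Matrix.mul_one]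
    have e2 : P - G * L * P = (1 - G * L) * P := by
      rw [Matrix.sub_mul, Matrix.one_mul, Matrix.mul_assoc]
    rw [e1, e2]
    have h3 : Pᵀ * (1 - Lᴴ * Gᴴ) * (L - Lᴴ) * ((1 - G * L) * P)
        = Pᵀ * ((L - L * G * L - (Lᴴ - Lᴴ * Gᴴ * Lᴴ)) * P) := by
      rw [← hmaster]; simp only [Matrix.mul_assoc]
    rw [h3]
    simp only [Matrix.sub_mul, Matrix.mul_sub, Matrix.mul_assoc]
  rw [hsand, ← Matrix.smul_mul, ← Matrix.mul_smul]
  exact hImL.conjTranspose_mul_mul_same (P - G * L * P)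
end

section
/- If G is a Q-resolvent of the symmetric matrix L, then for any vector ψ_eff, the vector ψ := (P - GLP)ψ_eff satisfies PᵀLψ = L_eff ψ_eff, QLψ = 0, and P^I ψ = ψ_eff, where L_eff := PᵀLP - PᵀLGLP. -/
open Matrix

theorem stmt_6 {n m : ℕ} (P : Matrix (Fin n) (Fin m) ℂ)
    (hP : IsUnit (Pᵀ * P).det)
    (Q : Matrix (Fin n) (Fin n) ℂ) (hQ : Q = 1 - P * ((Pᵀ * P)⁻¹ * Pᵀ))
    (L G : Matrix (Fin n) (Fin n) ℂ) (hL : Lᵀ = L)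
    (hGsym : Gᵀ = G) (hGP : G * P = 0) (hGLQ : G * L * Q = Q)
    (ψeff : Fin m → ℂ) (ψ : Fin n → ℂ) (hψ : ψ = (P - G * L * P) *ᵥ ψeff) :
    (Pᵀ * L) *ᵥ ψ = (Pᵀ * L * P - Pᵀ * L * G * L * P) *ᵥ ψeff ∧
    (Q * L) *ᵥ ψ = 0 ∧
    ((Pᵀ * P)⁻¹ * Pᵀ) *ᵥ ψ = ψeff := by
  have hQsym : Qᵀ = Q := by
    rw [hQ]
    simp [transpose_sub, transpose_mul, transpose_nonsing_inv, Matrix.mul_assoc]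
  have hQLG : Q * L * G = Q := by
    have := congrArg Matrix.transpose hGLQ
    simpa [transpose_mul, hL, hGsym, hQsym, Matrix.mul_assoc] using this
  have hPG : Pᵀ * G = 0 := by
    have := congrArg Matrix.transpose hGP
    simpa [transpose_mul, hGsym] using this
  have h1 : Pᵀ * L * (P - G * L * P) = Pᵀ * L * P - Pᵀ * L * G * L * P := by
    simp only [Matrix.mul_sub, Matrix.mul_assoc]
  have h2 : Q * L * (P - G * L * P) = 0 := by
    rw [Matrix.mul_sub, ← Matrix.mul_assoc, ← Matrix.mul_assoc, hQLG, sub_self]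
  have h3 : (Pᵀ * P)⁻¹ * Pᵀ * (P - G * L * P) = 1 := by
    rw [Matrix.mul_sub, Matrix.mul_assoc ((Pᵀ * P)⁻¹) Pᵀ,
      Matrix.mul_assoc ((Pᵀ * P)⁻¹) Pᵀ (G * L * P), ← Matrix.mul_assoc Pᵀ (G * L) P,
      ← Matrix.mul_assoc Pᵀ G L, hPG, Matrix.nonsing_inv_mul _ hP]
    simp
  subst hψ
  refine ⟨?_, ?_, ?_⟩
  · rw [mulVec_mulVec, h1]
  · rw [mulVec_mulVec, h2, zero_mulVec]
  · rw [mulVec_mulVec, h3, one_mulVec]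
end

section
/- If G is a Q-resolvent of the symmetric matrix L, then the identities L_eff P^I = Pᵀ(1 - LG)L and (P^I)ᵀ L_eff = L(P - GLP) hold, where L_eff := PᵀLP - PᵀLGLP. -/
open Matrix

theorem stmt_7 {n m : ℕ} (P : Matrix (Fin n) (Fin m) ℂ)
    (hP : IsUnit (Pᵀ * P).det)
    (Q : Matrix (Fin n) (Fin n) ℂ) (hQ : Q = 1 - P * ((Pᵀ * P)⁻¹ * Pᵀ))
    (L G : Matrix (Fin n) (Fin n) ℂ) (hL : Lᵀ = L)
    (hGsym : Gᵀ = G) (hGP : G * P = 0) (hGLQ : G * L * Q = Q) :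
    (Pᵀ * L * P - Pᵀ * L * G * L * P) * ((Pᵀ * P)⁻¹ * Pᵀ)
      = Pᵀ * (1 - L * G) * L ∧
    ((Pᵀ * P)⁻¹ * Pᵀ)ᵀ * (Pᵀ * L * P - Pᵀ * L * G * L * P)
      = L * (P - G * L * P) := by
  have h1 : P * ((Pᵀ * P)⁻¹ * Pᵀ) = 1 - Q := by rw [hQ, sub_sub_cancel]
  have hinv : ((Pᵀ * P)⁻¹)ᵀ = (Pᵀ * P)⁻¹ := by
    rw [Matrix.transpose_nonsing_inv, Matrix.transpose_mul, Matrix.transpose_transpose]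
  have h2 : ((Pᵀ * P)⁻¹ * Pᵀ)ᵀ * Pᵀ = 1 - Q := by
    rw [Matrix.transpose_mul, Matrix.transpose_transpose, hinv, Matrix.mul_assoc, h1]
  have hQsym : Qᵀ = Q := by
    rw [hQ, Matrix.transpose_sub, Matrix.transpose_one, Matrix.transpose_mul,
      Matrix.transpose_mul, hinv, Matrix.transpose_transpose, Matrix.mul_assoc]
  have h3 : Q * L * G = Q := by
    have := congrArg Matrix.transpose hGLQ
    simpa [Matrix.transpose_mul, hL, hGsym, hQsym, Matrix.mul_assoc] using this
  have key1 : Pᵀ * L * (G * (L * Q)) = Pᵀ * (L * Q) := by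
    rw [← Matrix.mul_assoc G L, hGLQ]
    simp [Matrix.mul_assoc]
  constructor
  · simp only [Matrix.sub_mul, Matrix.mul_sub, Matrix.mul_one, Matrix.one_mul,
      Matrix.mul_assoc, h1]
    simp only [Matrix.mul_sub, Matrix.mul_one, ← Matrix.mul_assoc] at *
    rw [key1]
    abel
  · simp only [Matrix.mul_sub, ← Matrix.mul_assoc, h2, Matrix.sub_mul, Matrix.one_mul]
    rw [h3]
    abel
end

section
/- If G is a Q-resolvent of the symmetric matrix L, and both L and L_eff := PᵀLP - PᵀLGLP are invertible, then PᵀL⁻¹P = PᵀP · L_eff⁻¹ · PᵀP. -/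
open Matrix

theorem stmt_8 {n m : ℕ} (P : Matrix (Fin n) (Fin m) ℂ)
    (hP : IsUnit (Pᵀ * P).det)
    (Q : Matrix (Fin n) (Fin n) ℂ) (hQ : Q = 1 - P * ((Pᵀ * P)⁻¹ * Pᵀ))
    (L G : Matrix (Fin n) (Fin n) ℂ) (hL : Lᵀ = L) (hLinv : IsUnit L.det)
    (hGsym : Gᵀ = G) (hGP : G * P = 0) (hGLQ : G * L * Q = Q)
    (hLeff : IsUnit (Pᵀ * L * P - Pᵀ * L * G * L * P).det) :
    Pᵀ * L⁻¹ * P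
      = (Pᵀ * P) * (Pᵀ * L * P - Pᵀ * L * G * L * P)⁻¹ * (Pᵀ * P) := by
  set N := (Pᵀ * P)⁻¹ with hN
  set E := Pᵀ * L * P - Pᵀ * L * G * L * P with hE
  have hEinv : E * E⁻¹ = 1 := Matrix.mul_nonsing_inv _ hLeff
  have hPG : Pᵀ * G = 0 := by
    have := congrArg Matrix.transpose hGP
    simpa [Matrix.transpose_mul, hGsym] using this
  have hNsym : Nᵀ = N := by
    rw [hN, Matrix.transpose_nonsing_inv, Matrix.transpose_mul,
      Matrix.transpose_transpose]
  have hQsym : Qᵀ = Q := by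
    rw [hQ, Matrix.transpose_sub, Matrix.transpose_one, Matrix.transpose_mul,
      Matrix.transpose_mul, hNsym, Matrix.transpose_transpose, Matrix.mul_assoc]
  have hQLG : Q * (L * G) = Q := by
    have := congrArg Matrix.transpose hGLQ
    simpa [Matrix.transpose_mul, hGsym, hL, hQsym, Matrix.mul_assoc] using this
  have hQ0 : Q * (1 - L * G) = 0 := by
    rw [Matrix.mul_sub, Matrix.mul_one, hQLG, sub_self]
  have hone : (1 : Matrix (Fin n) (Fin n) ℂ) = P * (N * Pᵀ) + Q := by
    rw [hQ]; abel
  have hfix : (1 - L * G) = P * (N * (Pᵀ * (1 - L * G))) := by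
    calc 1 - L * G = (P * (N * Pᵀ) + Q) * (1 - L * G) := by rw [← hone, one_mul]
      _ = P * (N * Pᵀ) * (1 - L * G) + Q * (1 - L * G) := add_mul _ _ _
      _ = P * (N * (Pᵀ * (1 - L * G))) := by rw [hQ0, add_zero, Matrix.mul_assoc,
            Matrix.mul_assoc]
  have hkey : (1 - L * G) * (L * P) = P * (N * E) := by
    rw [hfix]
    have : Pᵀ * (1 - L * G) * (L * P) = E := by
      rw [hE]
      simp only [Matrix.mul_sub, Matrix.sub_mul, Matrix.mul_one, Matrix.mul_assoc]
    rw [Matrix.mul_assoc, Matrix.mul_assoc, this]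
  set R := G + (1 - G * L) * (P * (E⁻¹ * (Pᵀ * (1 - L * G)))) with hR
  have hLR : L * R = 1 := by
    have h1 : L * (1 - G * L) = (1 - L * G) * L := by
      simp only [Matrix.mul_sub, Matrix.sub_mul, Matrix.mul_one, Matrix.one_mul,
        Matrix.mul_assoc]
    calc L * R = L * G + L * (1 - G * L) * (P * (E⁻¹ * (Pᵀ * (1 - L * G)))) := by
          rw [hR, Matrix.mul_add, Matrix.mul_assoc]
      _ = L * G + (1 - L * G) * (L * P) * (E⁻¹ * (Pᵀ * (1 - L * G))) := by
          rw [h1]; simp only [Matrix.mul_assoc]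
      _ = L * G + P * (N * (E * (E⁻¹ * (Pᵀ * (1 - L * G))))) := by
          rw [hkey, Matrix.mul_assoc, Matrix.mul_assoc]
      _ = L * G + P * (N * (Pᵀ * (1 - L * G))) := by
          rw [← Matrix.mul_assoc E, hEinv, Matrix.one_mul]
      _ = 1 := by rw [← hfix]; abel
  have hinv : L⁻¹ = R := Matrix.inv_eq_right_inv hLR
  rw [hinv, hR]
  have hLGP : (1 - L * G) * P = P := by
    rw [Matrix.sub_mul, Matrix.one_mul, Matrix.mul_assoc, hGP, Matrix.mul_zero,
      sub_zero]
  have hPGL : Pᵀ * (1 - G * L) = Pᵀ := by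
    rw [Matrix.mul_sub, Matrix.mul_one, ← Matrix.mul_assoc, hPG, Matrix.zero_mul,
      sub_zero]
  calc Pᵀ * (G + (1 - G * L) * (P * (E⁻¹ * (Pᵀ * (1 - L * G))))) * P
      = Pᵀ * G * P + Pᵀ * (1 - G * L) * (P * (E⁻¹ * (Pᵀ * ((1 - L * G) * P)))) := by
        simp only [Matrix.mul_add, Matrix.add_mul, Matrix.mul_assoc]
    _ = (Pᵀ * P) * E⁻¹ * (Pᵀ * P) := by
        rw [hPG, Matrix.zero_mul, zero_add, hPGL, hLGP]
        simp only [Matrix.mul_assoc]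
end

section
/- Suppose G is a Q-resolvent of the symmetric matrix L and L_eff := PᵀLP - PᵀLGLP. If L_eff ψ_eff = 0, then ψ := (P - GLP)ψ_eff satisfies Lψ = 0 and P^I ψ = ψ_eff. Conversely, if Lψ = 0, then ψ_eff := P^I ψ satisfies L_eff ψ_eff = 0 and ψ = (P - GLP)ψ_eff. -/
open Matrix

theorem stmt_9 {n m : ℕ} (P : Matrix (Fin n) (Fin m) ℂ)
    (hP : IsUnit (Pᵀ * P).det)
    (Q : Matrix (Fin n) (Fin n) ℂ) (hQ : Q = 1 - P * ((Pᵀ * P)⁻¹ * Pᵀ))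
    (L G : Matrix (Fin n) (Fin n) ℂ) (hL : Lᵀ = L)
    (hGsym : Gᵀ = G) (hGP : G * P = 0) (hGLQ : G * L * Q = Q) :
    (∀ ψeff : Fin m → ℂ,
      (Pᵀ * L * P - Pᵀ * L * G * L * P) *ᵥ ψeff = 0 →
      L *ᵥ ((P - G * L * P) *ᵥ ψeff) = 0 ∧
      ((Pᵀ * P)⁻¹ * Pᵀ) *ᵥ ((P - G * L * P) *ᵥ ψeff) = ψeff) ∧
    (∀ ψ : Fin n → ℂ, L *ᵥ ψ = 0 →
      (Pᵀ * L * P - Pᵀ * L * G * L * P) *ᵥ (((Pᵀ * P)⁻¹ * Pᵀ) *ᵥ ψ) = 0 ∧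
      ψ = (P - G * L * P) *ᵥ (((Pᵀ * P)⁻¹ * Pᵀ) *ᵥ ψ)) := by
  have hPIP : ((Pᵀ*P)⁻¹ * Pᵀ) * P = 1 := by
    rw [Matrix.mul_assoc, Matrix.nonsing_inv_mul _ hP]
  have hPtG : Pᵀ * G = 0 := by
    have h := congrArg Matrix.transpose hGP
    simpa [Matrix.transpose_mul, hGsym] using h
  have hQt : Qᵀ = Q := by
    rw [hQ]; simp [Matrix.transpose_mul, Matrix.transpose_nonsing_inv, Matrix.mul_assoc]
  have hexp : G*L - G*L*(P*((Pᵀ*P)⁻¹*Pᵀ)) = 1 - P*((Pᵀ*P)⁻¹*Pᵀ) := by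
    rw [hQ] at hGLQ; simpa [Matrix.mul_sub] using hGLQ
  have hQLG : Q * (L*G) = Q := by
    have h := congrArg Matrix.transpose hGLQ
    simp only [Matrix.transpose_mul, hL, hGsym, hQt, Matrix.mul_assoc] at h
    exact h
  have hexp2 : L*G - P*((Pᵀ*P)⁻¹*Pᵀ)*(L*G) = 1 - P*((Pᵀ*P)⁻¹*Pᵀ) := by
    rw [hQ] at hQLG
    linear_combination (norm := (simp only [neg_smul, one_smul, Matrix.neg_mul, Matrix.mul_neg, Matrix.sub_mul, Matrix.mul_sub, Matrix.add_mul, Matrix.mul_add, Matrix.mul_one, Matrix.one_mul, Matrix.zero_mul, Matrix.mul_zero, Matrix.mul_assoc]; abel)) hQLG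
  have h1 : (L*G - P*((Pᵀ*P)⁻¹*Pᵀ)*(L*G)) * (L*P) = (1 - P*((Pᵀ*P)⁻¹*Pᵀ)) * (L*P) := by
    rw [hexp2]
  have hM1 : L * (P - G*L*P) = (P*(Pᵀ*P)⁻¹) * (Pᵀ*L*P - Pᵀ*L*G*L*P) := by
    linear_combination (norm := (simp only [neg_smul, one_smul, Matrix.neg_mul, Matrix.mul_neg, Matrix.sub_mul, Matrix.mul_sub, Matrix.add_mul, Matrix.mul_add, Matrix.mul_one, Matrix.one_mul, Matrix.zero_mul, Matrix.mul_zero, Matrix.mul_assoc]; abel)) -h1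
  have h2 : (Pᵀ*P)⁻¹ * (Pᵀ*G) * (L*P) = (Pᵀ*P)⁻¹ * (0 : Matrix (Fin m) (Fin n) ℂ) * (L*P) := by
    rw [hPtG]
  have hM2 : ((Pᵀ*P)⁻¹*Pᵀ) * (P - G*L*P) = 1 := by
    linear_combination (norm := (simp only [neg_smul, one_smul, Matrix.neg_mul, Matrix.mul_neg, Matrix.sub_mul, Matrix.mul_sub, Matrix.add_mul, Matrix.mul_add, Matrix.mul_one, Matrix.one_mul, Matrix.zero_mul, Matrix.mul_zero, Matrix.mul_assoc]; abel)) hPIP - h2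
  have hM3 : (P - G*L*P) * ((Pᵀ*P)⁻¹*Pᵀ) = 1 - G*L := by
    linear_combination (norm := (simp only [neg_smul, one_smul, Matrix.neg_mul, Matrix.mul_neg, Matrix.sub_mul, Matrix.mul_sub, Matrix.add_mul, Matrix.mul_add, Matrix.mul_one, Matrix.one_mul, Matrix.zero_mul, Matrix.mul_zero, Matrix.mul_assoc]; abel)) hexp
  have h4 : (Pᵀ*L) * (G*L - G*L*(P*((Pᵀ*P)⁻¹*Pᵀ))) = (Pᵀ*L) * (1 - P*((Pᵀ*P)⁻¹*Pᵀ)) := by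
    rw [hexp]
  have hM4 : (Pᵀ*L*P - Pᵀ*L*G*L*P) * ((Pᵀ*P)⁻¹*Pᵀ) = Pᵀ*L - Pᵀ*L*G*L := by
    linear_combination (norm := (simp only [neg_smul, one_smul, Matrix.neg_mul, Matrix.mul_neg, Matrix.sub_mul, Matrix.mul_sub, Matrix.add_mul, Matrix.mul_add, Matrix.mul_one, Matrix.one_mul, Matrix.zero_mul, Matrix.mul_zero, Matrix.mul_assoc]; abel)) h4
  refine ⟨fun ψe hψe => ⟨?_, ?_⟩, fun ψ hψ => ⟨?_, ?_⟩⟩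
  · rw [Matrix.mulVec_mulVec, hM1, ← Matrix.mulVec_mulVec, hψe, Matrix.mulVec_zero]
  · rw [Matrix.mulVec_mulVec, hM2, Matrix.one_mulVec]
  · rw [Matrix.mulVec_mulVec, hM4, Matrix.sub_mulVec, ← Matrix.mulVec_mulVec,
      ← Matrix.mulVec_mulVec ψ (Pᵀ*L*G) L, hψ, Matrix.mulVec_zero, Matrix.mulVec_zero, sub_zero]
  · rw [Matrix.mulVec_mulVec, hM3, Matrix.sub_mulVec, Matrix.one_mulVec,
      ← Matrix.mulVec_mulVec, hψ, Matrix.mulVec_zero, sub_zero]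
end

section
/- Let L_ref be a symmetric matrix commuting with Q, let G be a Q-resolvent of the symmetric matrix L, and set V := L_ref - L, Ω := 1 + GV, T := V + VGV. Then ΩP = (1 - GL)P, ΩᵀP = P, T = VΩ = ΩᵀV, and PᵀLΩP = L_eff = Pᵀ(L_ref - T)P, where L_eff := PᵀLP - PᵀLGLP. -/
open Matrix

theorem stmt_10 {n m : ℕ} (P : Matrix (Fin n) (Fin m) ℂ)
    (hP : IsUnit (Pᵀ * P).det)
    (Q : Matrix (Fin n) (Fin n) ℂ) (hQ : Q = 1 - P * ((Pᵀ * P)⁻¹ * Pᵀ))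
    (L Lref G : Matrix (Fin n) (Fin n) ℂ) (hL : Lᵀ = L)
    (hLref : Lrefᵀ = Lref) (hcomm : Lref * Q = Q * Lref)
    (hGsym : Gᵀ = G) (hGP : G * P = 0) (hGLQ : G * L * Q = Q)
    (V T Ω : Matrix (Fin n) (Fin n) ℂ)
    (hV : V = Lref - L) (hT : T = V + V * G * V) (hΩ : Ω = 1 + G * V) :
    Ω * P = (1 - G * L) * P ∧
    Ωᵀ * P = P ∧
    T = V * Ω ∧ T = Ωᵀ * V ∧
    Pᵀ * L * Ω * P = Pᵀ * L * P - Pᵀ * L * G * L * P ∧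
    Pᵀ * L * P - Pᵀ * L * G * L * P = Pᵀ * (Lref - T) * P := by
  have hinv : (Pᵀ * P)⁻¹ * (Pᵀ * P) = 1 := Matrix.nonsing_inv_mul _ hP
  have hQP : Q * P = 0 := by
    subst hQ
    have : P * ((Pᵀ * P)⁻¹ * Pᵀ) * P = P * ((Pᵀ * P)⁻¹ * (Pᵀ * P)) := by
      simp only [Matrix.mul_assoc]
    simp [Matrix.sub_mul, this, hinv]
  have hGQ : G * Q = G := by
    subst hQ
    have : G * (P * ((Pᵀ * P)⁻¹ * Pᵀ)) = G * P * ((Pᵀ * P)⁻¹ * Pᵀ) := by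
      simp only [Matrix.mul_assoc]
    simp [Matrix.mul_sub, this, hGP]
  have hGLrefP : G * Lref * P = 0 := by
    have key : G * Lref = G * Lref * Q := by
      conv_lhs => rw [← hGQ]
      rw [Matrix.mul_assoc, ← hcomm, ← Matrix.mul_assoc]
    rw [key, Matrix.mul_assoc, hQP, Matrix.mul_zero]
  have hGVP : G * V * P = -(G * L * P) := by
    subst hV
    simp only [Matrix.mul_sub, Matrix.sub_mul]
    rw [hGLrefP]
    simp
  have hVsym : Vᵀ = V := by
    rw [hV, Matrix.transpose_sub, hLref, hL]
  have hΩsym : Ωᵀ = 1 + V * G := by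
    rw [hΩ]; simp [Matrix.transpose_mul, hVsym, hGsym]
  have h1 : Ω * P = (1 - G * L) * P := by
    rw [hΩ]
    simp only [Matrix.add_mul, Matrix.sub_mul, Matrix.one_mul, hGVP]
    abel
  have h2 : Ωᵀ * P = P := by
    rw [hΩsym]
    simp only [Matrix.add_mul, Matrix.one_mul, Matrix.mul_assoc, hGP, Matrix.mul_zero,
      add_zero]
  have h3 : T = V * Ω := by
    rw [hT, hΩ]
    simp only [Matrix.mul_add, Matrix.mul_one, Matrix.mul_assoc]
  have h4 : T = Ωᵀ * V := by
    rw [hT, hΩsym]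
    simp only [Matrix.add_mul, Matrix.one_mul, Matrix.mul_assoc]
  have hPGL : Pᵀ * Lref * G = 0 := by
    have := congrArg Matrix.transpose hGLrefP
    simpa [Matrix.transpose_mul, hGsym, hLref, Matrix.mul_assoc] using this
  have h5 : Pᵀ * L * Ω * P = Pᵀ * L * P - Pᵀ * L * G * L * P := by
    have e : Pᵀ * L * Ω * P = Pᵀ * L * (Ω * P) := by simp only [Matrix.mul_assoc]
    rw [e, h1]
    simp only [Matrix.sub_mul, Matrix.one_mul, Matrix.mul_sub, Matrix.mul_assoc]
  refine ⟨h1, h2, h3, h4, h5, ?_⟩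
  have hTP : Pᵀ * T * P = Pᵀ * Lref * P - Pᵀ * L * P + Pᵀ * L * G * L * P := by
    have e1 : Pᵀ * T * P = Pᵀ * V * P + Pᵀ * V * (G * V * P) := by
      rw [hT]
      simp only [Matrix.mul_add, Matrix.add_mul, Matrix.mul_assoc]
    rw [e1, hGVP, hV]
    have e2 : Pᵀ * (Lref - L) * -(G * L * P)
        = -(Pᵀ * Lref * G * (L * P)) + Pᵀ * L * G * L * P := by
      simp only [Matrix.mul_sub, Matrix.sub_mul, Matrix.mul_neg, Matrix.neg_mul,
        Matrix.mul_assoc]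
      abel
    rw [e2, hPGL]
    simp only [Matrix.sub_mul, Matrix.mul_sub, Matrix.zero_mul, neg_zero, zero_add]
  have e3 : Pᵀ * (Lref - T) * P = Pᵀ * Lref * P - Pᵀ * T * P := by
    simp only [Matrix.mul_sub, Matrix.sub_mul]
  rw [e3, hTP]
  abel
end

section
/- Let L_ref be a symmetric matrix commuting with Q, G a Q-resolvent of the symmetric matrix L, V := L_ref - L, Ω := 1 + GV. If Ω is invertible, then G_ref := Ω⁻¹G is a Q-resolvent of L_ref (i.e., G_ref is symmetric with G_ref P = 0 and G_ref L_ref Q = Q), and Ω = (1 - W)⁻¹ where W := G_ref V. -/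
open Matrix

theorem stmt_11 {n m : ℕ} (P : Matrix (Fin n) (Fin m) ℂ)
    (hP : IsUnit (Pᵀ * P).det)
    (Q : Matrix (Fin n) (Fin n) ℂ) (hQ : Q = 1 - P * ((Pᵀ * P)⁻¹ * Pᵀ))
    (L Lref G : Matrix (Fin n) (Fin n) ℂ) (hL : Lᵀ = L)
    (hLref : Lrefᵀ = Lref) (hcomm : Lref * Q = Q * Lref)
    (hGsym : Gᵀ = G) (hGP : G * P = 0) (hGLQ : G * L * Q = Q)
    (V Ω : Matrix (Fin n) (Fin n) ℂ)
    (hV : V = Lref - L) (hΩ : Ω = 1 + G * V) (hΩinv : IsUnit Ω.det)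
    (Gref : Matrix (Fin n) (Fin n) ℂ) (hGref : Gref = Ω⁻¹ * G) :
    Grefᵀ = Gref ∧ Gref * P = 0 ∧ Gref * Lref * Q = Q ∧
    Ω = (1 - Gref * V)⁻¹ := by
  have hVsym : Vᵀ = V := by rw [hV, transpose_sub, hLref, hL]
  have hΩT : Ωᵀ = 1 + V * G := by
    rw [hΩ, transpose_add, transpose_one, transpose_mul, hVsym, hGsym]
  have hΩTdet : IsUnit Ωᵀ.det := by rwa [det_transpose]
  have hswap : Ω * G = G * Ωᵀ := by
    rw [hΩT, hΩ, add_mul, mul_add, one_mul, mul_one, mul_assoc]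
  have hkey : Ω * (G * Ωᵀ⁻¹) = G := by
    rw [← mul_assoc, hswap, mul_assoc, mul_nonsing_inv _ hΩTdet, mul_one]
  have hsym : Grefᵀ = Gref := by
    rw [hGref, transpose_mul, transpose_nonsing_inv, hGsym]
    calc G * Ωᵀ⁻¹ = Ω⁻¹ * (Ω * (G * Ωᵀ⁻¹)) := by
          rw [← mul_assoc, nonsing_inv_mul _ hΩinv, one_mul]
      _ = Ω⁻¹ * G := by rw [hkey]
  have hGrefP : Gref * P = 0 := by rw [hGref, Matrix.mul_assoc, hGP, Matrix.mul_zero]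
  have hGLrefQ : Gref * Lref * Q = Q := by
    have hLrefeq : Lref = L + V := by rw [hV]; abel
    have h1 : G * Lref * Q = Ω * Q := by
      rw [hLrefeq, mul_add, add_mul, hGLQ, hΩ, add_mul, one_mul, mul_assoc]
    have h2 : Gref * Lref * Q = Ω⁻¹ * (G * Lref * Q) := by
      rw [hGref]; simp only [mul_assoc]
    rw [h2, h1, ← mul_assoc, nonsing_inv_mul _ hΩinv, one_mul]
  have hW : 1 - Gref * V = Ω⁻¹ := by
    calc 1 - Gref * V = Ω⁻¹ * Ω - Ω⁻¹ * (G * V) := by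
          rw [nonsing_inv_mul _ hΩinv, hGref, mul_assoc]
      _ = Ω⁻¹ * (Ω - G * V) := by rw [mul_sub]
      _ = Ω⁻¹ := by rw [hΩ, add_sub_cancel_right, mul_one]
  exact ⟨hsym, hGrefP, hGLrefQ, by rw [hW, nonsing_inv_nonsing_inv _ hΩinv]⟩
end

section
/- Suppose G_ref is a Q-resolvent of a symmetric matrix L_ref commuting with Q, and that 1 - W is invertible where W := G_ref V with V symmetric and L := L_ref - V. Set Ω := (1 - W)⁻¹ and G := Ω G_ref. Then G is a Q-resolvent of L, and the identities Ω = 1 + WΩ = 1 + ΩW, T = V + TW = V + WᵀT where T := V + VGV, and G = G_ref + WG = G_ref + GWᵀ hold. -/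
open Matrix

theorem stmt_12 {n m : ℕ} (P : Matrix (Fin n) (Fin m) ℂ)
    (hP : IsUnit (Pᵀ * P).det)
    (Q : Matrix (Fin n) (Fin n) ℂ) (hQ : Q = 1 - P * ((Pᵀ * P)⁻¹ * Pᵀ))
    (Lref V Gref : Matrix (Fin n) (Fin n) ℂ)
    (hLref : Lrefᵀ = Lref) (hVsym : Vᵀ = V) (hcomm : Lref * Q = Q * Lref)
    (hGrefsym : Grefᵀ = Gref) (hGrefP : Gref * P = 0)
    (hGrefLQ : Gref * Lref * Q = Q)
    (L W Ω G T : Matrix (Fin n) (Fin n) ℂ)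
    (hLdef : L = Lref - V) (hW : W = Gref * V)
    (hWinv : IsUnit (1 - W).det) (hΩ : Ω = (1 - W)⁻¹)
    (hG : G = Ω * Gref) (hT : T = V + V * G * V) :
    Gᵀ = G ∧ G * P = 0 ∧ G * L * Q = Q ∧
    Ω = 1 + W * Ω ∧ Ω = 1 + Ω * W ∧
    T = V + T * W ∧ T = V + Wᵀ * T ∧
    G = Gref + W * G ∧ G = Gref + G * Wᵀ := by
  have hdet' : IsUnit ((1 - W)ᵀ).det := by rw [Matrix.det_transpose]; exact hWinv
  have hinv1 : Ω * (1 - W) = 1 := by rw [hΩ]; exact Matrix.nonsing_inv_mul _ hWinv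
  have hinv2 : (1 - W) * Ω = 1 := by rw [hΩ]; exact Matrix.mul_nonsing_inv _ hWinv
  have hWt : Wᵀ = V * Gref := by rw [hW, Matrix.transpose_mul, hVsym, hGrefsym]
  -- swap identity
  have hswap : (1 - W) * Gref = Gref * (1 - W)ᵀ := by
    rw [Matrix.transpose_sub, Matrix.transpose_one, hWt, hW]
    noncomm_ring
  -- symmetry of G
  have hGsym : Gᵀ = G := by
    rw [hG, Matrix.transpose_mul, hGrefsym, hΩ, Matrix.transpose_nonsing_inv]
    calc Gref * ((1 - W)ᵀ)⁻¹
        = ((1 - W)⁻¹ * (1 - W)) * (Gref * ((1 - W)ᵀ)⁻¹) := by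
          rw [Matrix.nonsing_inv_mul _ hWinv, one_mul]
      _ = (1 - W)⁻¹ * (((1 - W) * Gref) * ((1 - W)ᵀ)⁻¹) := by noncomm_ring
      _ = (1 - W)⁻¹ * (Gref * ((1 - W)ᵀ * ((1 - W)ᵀ)⁻¹)) := by rw [hswap]; noncomm_ring
      _ = (1 - W)⁻¹ * Gref := by rw [Matrix.mul_nonsing_inv _ hdet', mul_one]
  -- Ω identities
  have hΩ1 : Ω = 1 + W * Ω := by
    have h := hinv2; rw [sub_mul, one_mul] at h
    exact (sub_eq_iff_eq_add.mp h).trans (by rw [add_comm])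
  have hΩ2 : Ω = 1 + Ω * W := by
    have h := hinv1; rw [mul_sub, mul_one] at h
    exact (sub_eq_iff_eq_add.mp h).trans (by rw [add_comm])
  -- G identities
  have hGid1 : G = Gref + W * G := by
    rw [hG]
    nth_rewrite 1 [hΩ1]
    rw [add_mul, one_mul, Matrix.mul_assoc]
  have hGid2 : G = Gref + G * Wᵀ := by
    have h := congrArg Matrix.transpose hGid1
    rw [Matrix.transpose_add, Matrix.transpose_mul, hGsym, hGrefsym] at h
    exact h
  -- G * P = 0
  have hGP : G * P = 0 := by rw [hG, Matrix.mul_assoc, hGrefP, Matrix.mul_zero]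
  -- G * L * Q = Q
  have hGLQ : G * L * Q = Q := by
    have e1 : Gref * (Lref - V) * Q = (1 - W) * Q := by
      rw [mul_sub, sub_mul, hGrefLQ, ← hW, sub_mul, one_mul]
    rw [hG, hLdef, Matrix.mul_assoc Ω Gref (Lref - V), Matrix.mul_assoc Ω _ Q, e1,
      ← Matrix.mul_assoc, hinv1, one_mul]
  -- auxiliary
  have hGVG : G * V * Gref = G - Gref := by
    have h := hGid2; rw [hWt] at h
    rw [Matrix.mul_assoc]
    exact (sub_eq_iff_eq_add'.mpr h).symm
  have hGrefVG : Gref * V * G = G - Gref := by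
    have h := hGid1; rw [hW] at h
    exact (sub_eq_iff_eq_add'.mpr h).symm
  -- T identities
  have hT1 : T = V + T * W := by
    have h : (V + V * G * V) * (Gref * V) = V * G * V := by
      calc (V + V * G * V) * (Gref * V)
          = V * (Gref + G * V * Gref) * V := by noncomm_ring
        _ = V * (Gref + (G - Gref)) * V := by rw [hGVG]
        _ = V * G * V := by noncomm_ring
    rw [hT, hW, h]
  have hT2 : T = V + Wᵀ * T := by
    have h : (V * Gref) * (V + V * G * V) = V * G * V := by
      calc (V * Gref) * (V + V * G * V)
          = V * (Gref + Gref * V * G) * V := by noncomm_ring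
        _ = V * (Gref + (G - Gref)) * V := by rw [hGrefVG]
        _ = V * G * V := by noncomm_ring
    rw [hT, hWt, h]
  exact ⟨hGsym, hGP, hGLQ, hΩ1, hΩ2, hT1, hT2, hGid1, hGid2⟩
end

section
/- Let P have invertible PᵀP, P₀ have invertible P₀P₀ᵀ, L be symmetric, and suppose R and L' satisfy P₀ᵀLR + P₀ᵀPL' = P₀ᵀLP and PᵀR = 0. Then L_eff := PᵀLP - RᵀLR is symmetric and satisfies L_eff = PᵀL(P - R) and (P^I)ᵀL_eff = L(P - R), where P^I := (PᵀP)⁻¹Pᵀ. -/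
open Matrix

theorem stmt_14 {n m k : ℕ} (L : Matrix (Fin n) (Fin n) ℂ) (hL : Lᵀ = L)
    (P : Matrix (Fin n) (Fin m) ℂ) (hP : IsUnit (Pᵀ * P).det)
    (P₀ : Matrix (Fin n) (Fin k) ℂ) (hP₀ : IsUnit (P₀ * P₀ᵀ).det)
    (R : Matrix (Fin n) (Fin m) ℂ) (L' : Matrix (Fin m) (Fin m) ℂ)
    (h1 : P₀ᵀ * L * R + P₀ᵀ * P * L' = P₀ᵀ * L * P)
    (h2 : Pᵀ * R = 0) :
    (Pᵀ * L * P - Rᵀ * L * R)ᵀ = Pᵀ * L * P - Rᵀ * L * R ∧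
    Pᵀ * L * P - Rᵀ * L * R = Pᵀ * L * (P - R) ∧
    ((Pᵀ * P)⁻¹ * Pᵀ)ᵀ * (Pᵀ * L * P - Rᵀ * L * R) = L * (P - R) := by
  -- Key: L * (P - R) = P * L'
  have hzero : P₀ᵀ * (L * P - L * R - P * L') = 0 := by
    rw [Matrix.mul_sub, Matrix.mul_sub, ← Matrix.mul_assoc, ← Matrix.mul_assoc,
      ← Matrix.mul_assoc, ← h1]
    abel
  have h4 : L * P - L * R - P * L' = 0 := by
    have h3 : (P₀ * P₀ᵀ) * (L * P - L * R - P * L') = 0 := by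
      rw [Matrix.mul_assoc, hzero, Matrix.mul_zero]
    have := congrArg (fun M => (P₀ * P₀ᵀ)⁻¹ * M) h3
    simpa [← Matrix.mul_assoc, Matrix.nonsing_inv_mul _ hP₀] using this
  have hKey : L * (P - R) = P * L' := by
    rw [Matrix.mul_sub]; exact sub_eq_zero.mp h4
  have hRP : Rᵀ * P = 0 := by
    have := congrArg Matrix.transpose h2
    simpa using this
  -- Rᵀ L R = Rᵀ L P
  have hRLR : Rᵀ * L * R = Rᵀ * L * P := by
    have h5 : Rᵀ * (L * (P - R)) = Rᵀ * (P * L') := by rw [hKey]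
    rw [Matrix.mul_sub, Matrix.mul_sub, ← Matrix.mul_assoc, ← Matrix.mul_assoc,
      ← Matrix.mul_assoc, hRP, Matrix.zero_mul, sub_eq_zero] at h5
    exact h5.symm
  have hsymmR : (Rᵀ * L * R)ᵀ = Rᵀ * L * R := by
    rw [Matrix.transpose_mul, Matrix.transpose_mul, Matrix.transpose_transpose, hL,
      Matrix.mul_assoc]
  -- Rᵀ L R = Pᵀ L R
  have hRLR2 : Rᵀ * L * R = Pᵀ * L * R := by
    calc Rᵀ * L * R = (Rᵀ * L * R)ᵀ := hsymmR.symm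
      _ = (Rᵀ * L * P)ᵀ := by rw [hRLR]
      _ = Pᵀ * Lᵀ * R := by
          rw [Matrix.transpose_mul, Matrix.transpose_mul, Matrix.transpose_transpose,
            Matrix.mul_assoc]
      _ = Pᵀ * L * R := by rw [hL]
  have part2 : Pᵀ * L * P - Rᵀ * L * R = Pᵀ * L * (P - R) := by
    rw [hRLR2, Matrix.mul_sub]
  refine ⟨?_, part2, ?_⟩
  · rw [Matrix.transpose_sub, hsymmR, Matrix.transpose_mul, Matrix.transpose_mul,
      Matrix.transpose_transpose, hL, ← Matrix.mul_assoc]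
  · rw [part2, Matrix.transpose_mul, Matrix.transpose_transpose,
      Matrix.transpose_nonsing_inv, Matrix.transpose_mul, Matrix.transpose_transpose]
    have hstep : Pᵀ * L * (P - R) = Pᵀ * P * L' := by
      rw [Matrix.mul_assoc, hKey, Matrix.mul_assoc]
    rw [hstep, Matrix.mul_assoc P, ← Matrix.mul_assoc (Pᵀ * P)⁻¹,
      Matrix.nonsing_inv_mul _ hP, Matrix.one_mul, ← hKey]
end

section
/- In the projection-free reduction setting, if additionally L and L_eff := PᵀLP - RᵀLR are invertible, then PᵀL⁻¹P = PᵀP · L_eff⁻¹ · PᵀP. -/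
open Matrix

theorem stmt_15 {n m k : ℕ} (L : Matrix (Fin n) (Fin n) ℂ) (hL : Lᵀ = L)
    (hLinv : IsUnit L.det)
    (P : Matrix (Fin n) (Fin m) ℂ) (hP : IsUnit (Pᵀ * P).det)
    (P₀ : Matrix (Fin n) (Fin k) ℂ) (hP₀ : IsUnit (P₀ * P₀ᵀ).det)
    (R : Matrix (Fin n) (Fin m) ℂ) (L' : Matrix (Fin m) (Fin m) ℂ)
    (h1 : P₀ᵀ * L * R + P₀ᵀ * P * L' = P₀ᵀ * L * P)
    (h2 : Pᵀ * R = 0)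
    (hLeff : IsUnit (Pᵀ * L * P - Rᵀ * L * R).det) :
    Pᵀ * L⁻¹ * P = (Pᵀ * P) * (Pᵀ * L * P - Rᵀ * L * R)⁻¹ * (Pᵀ * P) := by
  have hP₀inv : (P₀ * P₀ᵀ)⁻¹ * (P₀ * P₀ᵀ) = 1 := Matrix.nonsing_inv_mul _ hP₀
  have hLi : L⁻¹ * L = 1 := Matrix.nonsing_inv_mul _ hLinv
  have hLsym : (L⁻¹)ᵀ = L⁻¹ := by rw [Matrix.transpose_nonsing_inv, hL]
  have cancel : ∀ X : Matrix (Fin n) (Fin m) ℂ, L⁻¹ * (L * X) = X := by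
    intro X; rw [← Matrix.mul_assoc, hLi, Matrix.one_mul]
  -- Step 1: cancel P₀ᵀ on the left in h1
  have key : L * R + P * L' = L * P := by
    have h0 : P₀ᵀ * (L * R + P * L' - L * P) = 0 := by
      rw [Matrix.mul_sub, Matrix.mul_add, ← Matrix.mul_assoc, ← Matrix.mul_assoc,
        ← Matrix.mul_assoc, h1, sub_self]
    have h3 : L * R + P * L' - L * P = 0 := by
      calc L * R + P * L' - L * P
          = ((P₀ * P₀ᵀ)⁻¹ * (P₀ * P₀ᵀ)) * (L * R + P * L' - L * P) := by
            rw [hP₀inv, Matrix.one_mul]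
        _ = (P₀ * P₀ᵀ)⁻¹ * (P₀ * (P₀ᵀ * (L * R + P * L' - L * P))) := by
            rw [Matrix.mul_assoc, Matrix.mul_assoc]
        _ = 0 := by rw [h0, Matrix.mul_zero, Matrix.mul_zero]
    exact sub_eq_zero.mp h3
  have hLR : L * R = L * P - P * L' := by
    rw [eq_sub_iff_add_eq]; exact key
  -- Step 2: Pᵀ L⁻¹ P L' = Pᵀ P
  have hSL' : Pᵀ * L⁻¹ * P * L' = Pᵀ * P := by
    calc Pᵀ * L⁻¹ * P * L' = Pᵀ * (L⁻¹ * (P * L')) := by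
          rw [Matrix.mul_assoc, Matrix.mul_assoc]
      _ = Pᵀ * P - Pᵀ * R := by
          have hPL' : P * L' = L * P - L * R := by
            rw [eq_sub_iff_add_eq, add_comm]; exact key
          rw [hPL', Matrix.mul_sub L⁻¹, cancel, cancel, Matrix.mul_sub]
      _ = Pᵀ * P := by rw [h2, sub_zero]
  -- Step 3: Pᵀ L R
  have hPLR : Pᵀ * L * R = Pᵀ * L * P - Pᵀ * P * L' := by
    rw [Matrix.mul_assoc, hLR, Matrix.mul_sub, ← Matrix.mul_assoc, ← Matrix.mul_assoc]
  -- Step 4: Rᵀ L R = Pᵀ L P - L'ᵀ (Pᵀ P)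
  have hRLR : Rᵀ * L * R = Pᵀ * L * P - L'ᵀ * (Pᵀ * P) := by
    have hRP : Rᵀ * P = 0 := by
      have := congrArg Matrix.transpose h2
      rwa [Matrix.transpose_mul, Matrix.transpose_transpose, Matrix.transpose_zero] at this
    have hRLP : Rᵀ * L * P = Pᵀ * L * P - L'ᵀ * (Pᵀ * P) := by
      have := congrArg Matrix.transpose hPLR
      simp only [Matrix.transpose_sub, Matrix.transpose_mul, Matrix.transpose_transpose,
        hL] at this
      simp only [← Matrix.mul_assoc] at this
      simp only [← Matrix.mul_assoc]
      exact this
    calc Rᵀ * L * R = Rᵀ * (L * P - P * L') := by rw [Matrix.mul_assoc, hLR]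
      _ = Rᵀ * L * P - Rᵀ * P * L' := by
          rw [Matrix.mul_sub, ← Matrix.mul_assoc, ← Matrix.mul_assoc]
      _ = Pᵀ * L * P - L'ᵀ * (Pᵀ * P) := by rw [hRP, Matrix.zero_mul, sub_zero, hRLP]
  have hLeffEq : Pᵀ * L * P - Rᵀ * L * R = L'ᵀ * (Pᵀ * P) := by
    rw [hRLR, sub_sub_cancel]
  -- Step 5: L' is invertible
  have hL'det : IsUnit (L'ᵀ).det := by
    rw [hLeffEq, Matrix.det_mul] at hLeff
    exact isUnit_of_mul_isUnit_left hLeff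
  -- Step 6: L'ᵀ * (Pᵀ L⁻¹ P) = Pᵀ P
  have hL'S : L'ᵀ * (Pᵀ * L⁻¹ * P) = Pᵀ * P := by
    have := congrArg Matrix.transpose hSL'
    simp only [Matrix.transpose_mul, Matrix.transpose_transpose, hLsym] at this
    simp only [← Matrix.mul_assoc] at this
    simp only [← Matrix.mul_assoc]
    exact this
  -- Finish
  rw [hLeffEq, Matrix.mul_inv_rev, ← Matrix.mul_assoc (Pᵀ * P),
    Matrix.mul_nonsing_inv _ hP, Matrix.one_mul]
  calc Pᵀ * L⁻¹ * P = (L'ᵀ)⁻¹ * L'ᵀ * (Pᵀ * L⁻¹ * P) := by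
        rw [Matrix.nonsing_inv_mul _ hL'det, Matrix.one_mul]
    _ = (L'ᵀ)⁻¹ * (Pᵀ * P) := by rw [Matrix.mul_assoc, hL'S]
end

section
/- In the projection-free reduction setting, for any vector ψ, defining ψ_eff := P^I ψ and ψ₀ := P₀^I(ψ - (P - R)ψ_eff) with P^I := (PᵀP)⁻¹Pᵀ and P₀^I := P₀ᵀ(P₀P₀ᵀ)⁻¹, one has PᵀP₀ψ₀ = 0 and ψ = (P - R)ψ_eff + P₀ψ₀. Moreover, whenever ψ = (P - R)ψ_eff + P₀ψ₀ with PᵀP₀ψ₀ = 0, then Lψ = 0 if and only if both L_eff ψ_eff = 0 and P₀ᵀLP₀ψ₀ = 0, where L_eff := PᵀLP - RᵀLR. -/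
open Matrix

theorem stmt_16 {n m k : ℕ} (L : Matrix (Fin n) (Fin n) ℂ) (hL : Lᵀ = L)
    (P : Matrix (Fin n) (Fin m) ℂ) (hP : IsUnit (Pᵀ * P).det)
    (P₀ : Matrix (Fin n) (Fin k) ℂ) (hP₀ : IsUnit (P₀ * P₀ᵀ).det)
    (R : Matrix (Fin n) (Fin m) ℂ) (L' : Matrix (Fin m) (Fin m) ℂ)
    (h1 : P₀ᵀ * L * R + P₀ᵀ * P * L' = P₀ᵀ * L * P)
    (h2 : Pᵀ * R = 0) :
    (∀ ψ : Fin n → ℂ,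
      Pᵀ *ᵥ (P₀ *ᵥ ((P₀ᵀ * (P₀ * P₀ᵀ)⁻¹) *ᵥ
        (ψ - (P - R) *ᵥ (((Pᵀ * P)⁻¹ * Pᵀ) *ᵥ ψ)))) = 0 ∧
      ψ = (P - R) *ᵥ (((Pᵀ * P)⁻¹ * Pᵀ) *ᵥ ψ)
        + P₀ *ᵥ ((P₀ᵀ * (P₀ * P₀ᵀ)⁻¹) *ᵥ
            (ψ - (P - R) *ᵥ (((Pᵀ * P)⁻¹ * Pᵀ) *ᵥ ψ)))) ∧
    (∀ (ψ : Fin n → ℂ) (ψeff : Fin m → ℂ) (ψ₀ : Fin k → ℂ),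
      ψ = (P - R) *ᵥ ψeff + P₀ *ᵥ ψ₀ →
      Pᵀ *ᵥ (P₀ *ᵥ ψ₀) = 0 →
      (L *ᵥ ψ = 0 ↔
        (Pᵀ * L * P - Rᵀ * L * R) *ᵥ ψeff = 0 ∧
        (P₀ᵀ * L * P₀) *ᵥ ψ₀ = 0)) := by
  -- basic inverse facts
  have hPi : (Pᵀ * P) * (Pᵀ * P)⁻¹ = 1 := Matrix.mul_nonsing_inv _ hP
  have hPi' : (Pᵀ * P)⁻¹ * (Pᵀ * P) = 1 := Matrix.nonsing_inv_mul _ hP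
  have hP₀i : (P₀ * P₀ᵀ) * (P₀ * P₀ᵀ)⁻¹ = 1 := Matrix.mul_nonsing_inv _ hP₀
  have hP₀i' : (P₀ * P₀ᵀ)⁻¹ * (P₀ * P₀ᵀ) = 1 := Matrix.nonsing_inv_mul _ hP₀
  -- P₀ᵀ is injective (on vectors)
  have hP₀inj : ∀ x : Fin n → ℂ, P₀ᵀ *ᵥ x = 0 → x = 0 := by
    intro x hx
    have h : (P₀ * P₀ᵀ)⁻¹ *ᵥ (P₀ *ᵥ (P₀ᵀ *ᵥ x)) = x := by
      simp only [Matrix.mulVec_mulVec, ← Matrix.mul_assoc]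
      rw [Matrix.mul_assoc (P₀ * P₀ᵀ)⁻¹ P₀ P₀ᵀ] at *
      rw [hP₀i', Matrix.one_mulVec]
    rw [hx] at h
    simpa using h.symm
  -- PᵀP is injective (on vectors)
  have hPPinj : ∀ y : Fin m → ℂ, (Pᵀ * P) *ᵥ y = 0 → y = 0 := by
    intro y hy
    have h : (Pᵀ * P)⁻¹ *ᵥ ((Pᵀ * P) *ᵥ y) = y := by
      rw [Matrix.mulVec_mulVec, hPi', Matrix.one_mulVec]
    rw [hy] at h
    simpa using h.symm
  -- key matrix identity from h1 : L * (P - R) = P * L'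
  have hK1 : L * (P - R) = P * L' := by
    have hM : P₀ᵀ * (L * (P - R) - P * L') = 0 := by
      simp only [Matrix.mul_sub, ← Matrix.mul_assoc]
      rw [sub_sub, h1, sub_self]
    have hz : L * (P - R) - P * L'
        = (P₀ * P₀ᵀ)⁻¹ * (P₀ * (P₀ᵀ * (L * (P - R) - P * L'))) := by
      rw [← Matrix.mul_assoc, ← Matrix.mul_assoc, Matrix.mul_assoc (P₀ * P₀ᵀ)⁻¹ P₀ P₀ᵀ,
        hP₀i', Matrix.one_mul]
    rw [hM, Matrix.mul_zero, Matrix.mul_zero] at hz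
    exact sub_eq_zero.mp hz
  have hRP : Rᵀ * P = 0 := by
    have := congrArg Matrix.transpose h2
    simpa [Matrix.transpose_mul] using this
  -- Rᵀ * L * (P - R) = 0 and consequences
  have hR0 : Rᵀ * (L * (P - R)) = 0 := by
    rw [hK1, ← Matrix.mul_assoc, hRP, Matrix.zero_mul]
  have hRLP : Rᵀ * L * P = Rᵀ * L * R := by
    simp only [Matrix.mul_sub, ← Matrix.mul_assoc] at hR0
    exact sub_eq_zero.mp hR0
  have hPLR : Pᵀ * L * R = Rᵀ * L * R := by
    have h' := congrArg Matrix.transpose hRLP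
    simp only [Matrix.transpose_mul, Matrix.transpose_transpose, hL] at h'
    rw [Matrix.mul_assoc, Matrix.mul_assoc]
    exact h'
  -- L_eff = (PᵀP) * L'
  have hLeff : Pᵀ * L * P - Rᵀ * L * R = Pᵀ * P * L' := by
    have e1 : Pᵀ * L * P - Rᵀ * L * R = Pᵀ * (L * (P - R)) := by
      rw [← hPLR, Matrix.mul_sub, Matrix.mul_sub, ← Matrix.mul_assoc, ← Matrix.mul_assoc]
    rw [e1, hK1, ← Matrix.mul_assoc]
  -- Rᵀ * L = Pᵀ * L - L'ᵀ * Pᵀ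
  have hRL : Rᵀ * L = Pᵀ * L - L'ᵀ * Pᵀ := by
    have h' := congrArg Matrix.transpose hK1
    simp only [Matrix.transpose_mul, Matrix.transpose_sub, Matrix.transpose_transpose, hL,
      Matrix.sub_mul] at h'
    -- h' : Pᵀ * L - Rᵀ * L = L'ᵀ * Pᵀ
    rw [← h']
    abel
  refine ⟨?_, ?_⟩
  · intro ψ
    set ψeff : Fin m → ℂ := ((Pᵀ * P)⁻¹ * Pᵀ) *ᵥ ψ with hψeff
    set η : Fin n → ℂ := ψ - (P - R) *ᵥ ψeff with hη
    have hrecon : P₀ *ᵥ ((P₀ᵀ * (P₀ * P₀ᵀ)⁻¹) *ᵥ η) = η := by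
      rw [Matrix.mulVec_mulVec, ← Matrix.mul_assoc, hP₀i, Matrix.one_mulVec]
    have hPη : Pᵀ *ᵥ η = 0 := by
      have e : Pᵀ *ᵥ ((P - R) *ᵥ ψeff) = Pᵀ *ᵥ ψ := by
        rw [Matrix.mulVec_mulVec, Matrix.mul_sub, h2, sub_zero, hψeff,
          Matrix.mulVec_mulVec, ← Matrix.mul_assoc, hPi, Matrix.one_mul]
      rw [hη, Matrix.mulVec_sub, e, sub_self]
    refine ⟨?_, ?_⟩
    · rw [hrecon]
      exact hPη
    · rw [hrecon, hη]
      abel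
  · intro ψ ψeff ψ₀ hdec horth
    set v : Fin n → ℂ := P₀ *ᵥ ψ₀ with hv
    clear_value v
    -- decomposition of L ψ
    have hψ : L *ᵥ ψ = P *ᵥ (L' *ᵥ ψeff) + L *ᵥ v := by
      rw [hdec, Matrix.mulVec_add, Matrix.mulVec_mulVec, hK1, ← Matrix.mulVec_mulVec]
    -- conversion helpers
    have hconv : ∀ x : Fin m → ℂ, (Pᵀ * P * L') *ᵥ x = (Pᵀ * P) *ᵥ (L' *ᵥ x) := by
      intro x; rw [Matrix.mulVec_mulVec]
    have hconv₀ : (P₀ᵀ * L * P₀) *ᵥ ψ₀ = P₀ᵀ *ᵥ (L *ᵥ v) := by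
      rw [hv]
      simp only [Matrix.mulVec_mulVec, Matrix.mul_assoc]
    constructor
    · intro h0
      -- Rᵀ L v = Pᵀ L v (uses hRL and horth)
      have hRv : Rᵀ *ᵥ (L *ᵥ v) = Pᵀ *ᵥ (L *ᵥ v) := by
        rw [Matrix.mulVec_mulVec, Matrix.mulVec_mulVec, hRL, Matrix.sub_mulVec,
          ← Matrix.mulVec_mulVec v L'ᵀ Pᵀ, horth, Matrix.mulVec_zero, sub_zero]
      -- Rᵀ L ψ = 0, and Rᵀ kills the P-component
      have hRLv : Rᵀ *ᵥ (L *ᵥ v) = 0 := by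
        have hRψ : Rᵀ *ᵥ (L *ᵥ ψ) = 0 := by rw [h0, Matrix.mulVec_zero]
        rw [hψ, Matrix.mulVec_add, Matrix.mulVec_mulVec (L' *ᵥ ψeff) Rᵀ P, hRP,
          Matrix.zero_mulVec, zero_add] at hRψ
        exact hRψ
      have hPLv : Pᵀ *ᵥ (L *ᵥ v) = 0 := by rw [← hRv]; exact hRLv
      -- hence PᵀP (L' ψeff) = 0, so L' ψeff = 0
      have hL'e : L' *ᵥ ψeff = 0 := by
        apply hPPinj
        have hPψ : Pᵀ *ᵥ (L *ᵥ ψ) = 0 := by rw [h0, Matrix.mulVec_zero]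
        rw [hψ, Matrix.mulVec_add, Matrix.mulVec_mulVec (L' *ᵥ ψeff) Pᵀ P, hPLv,
          add_zero] at hPψ
        exact hPψ
      -- hence L v = 0
      have hLv : L *ᵥ v = 0 := by
        have h' := hψ.symm
        rw [h0, hL'e, Matrix.mulVec_zero, zero_add] at h'
        exact h'
      refine ⟨?_, ?_⟩
      · rw [hLeff, hconv, ← Matrix.mulVec_mulVec, hL'e, Matrix.mulVec_zero,
          Matrix.mulVec_zero]
      · rw [hconv₀, hLv, Matrix.mulVec_zero]
    · rintro ⟨he, h0⟩
      have hL'e : L' *ᵥ ψeff = 0 := by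
        apply hPPinj
        rw [hLeff, hconv] at he
        exact he
      have hLv : L *ᵥ v = 0 := by
        apply hP₀inj
        rw [← hconv₀]
        exact h0
      rw [hψ, hL'e, Matrix.mulVec_zero, hLv, add_zero]
end

section
/- Optimality of the backward error projection: let L be a symmetric Hermitian n×n complex matrix (Lᵀ = L and L* = L) and ψ ∈ ℂ^n a nonzero real vector (ψ̄ = ψ). Then any symmetric Hermitian matrix L̃ with L̃ψ = 0 satisfies trace((L̃ - L)²) ≥ τ_L(ψ) := 2(Lψ)ᵀ(Lψ)/(ψᵀψ) - (ψᵀLψ/ψᵀψ)², with equality if and only if L̃ = (1 - ψψᵀ/ψᵀψ) L (1 - ψψᵀ/ψᵀψ). Moreover, (Lψ)ᵀ(Lψ)/(ψᵀψ) ≤ τ_L(ψ) ≤ 2(Lψ)ᵀ(Lψ)/(ψᵀψ), and τ_L(ψ) = 0 if and only if Lψ = 0. -/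
/-!
Write `P = 1 - ψψᵀ/ψᵀψ`, so that `P ψ = 0`, `Pᵀ = P` and `P² = P`, and put `G = P L P`. For an
admissible `L̃`, the difference `D = L̃ - G` satisfies `D = P D P`, so `D` is trace-orthogonal to
`G - L` and `tr((L̃ - L)²) = tr(D²) + tr((G - L)²)`. Since `D` is Hermitian, `tr(D²) = tr(Dᴴ D) ≥ 0`
with equality only for `D = 0`, and expanding `P` gives `tr((G - L)²) = τ`. Because `ψ` and `Lψ`
are real, `τ` is real and its bounds are Cauchy–Schwarz `(ψᵀLψ)² ≤ (ψᵀψ)((Lψ)ᵀ(Lψ))`.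
-/

open Matrix ComplexOrder

namespace Matrix

section Trace

variable {ι R : Type*} [Fintype ι]

theorem trace_sq_sandwich_sub_of_idempotent [CommRing R] {P : Matrix ι ι R} (hP : P * P = P)
    (L : Matrix ι ι R) :
    ((P * L * P - L) * (P * L * P - L)).trace = (L * L).trace - (P * L * (P * L)).trace := by
  have h1 : (P * L * P * (P * L * P)).trace = (P * L * (P * L)).trace := by
    rw [show P * L * P * (P * L * P) = P * L * (P * P) * L * P by simp only [Matrix.mul_assoc],
      hP, trace_mul_cycle, ← Matrix.mul_assoc, ← Matrix.mul_assoc, hP, Matrix.mul_assoc]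
  have h2 : (L * (P * L * P)).trace = (P * L * (P * L)).trace := by
    rw [← Matrix.mul_assoc, trace_mul_cycle, Matrix.mul_assoc]
  have h3 : (P * L * P * L).trace = (P * L * (P * L)).trace := by
    simp only [Matrix.mul_assoc]
  rw [sub_mul, mul_sub, mul_sub, trace_sub, trace_sub, trace_sub, h1, h2, h3]
  ring

variable [Ring R] [PartialOrder R] [StarRing R] [StarOrderedRing R] {D : Matrix ι ι R}

theorem IsHermitian.trace_mul_self_nonneg (hD : D.IsHermitian) : 0 ≤ (D * D).trace := by
  simpa only [hD.eq] using (posSemidef_conjTranspose_mul_self D).trace_nonneg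

theorem IsHermitian.trace_mul_self_eq_zero_iff [NoZeroDivisors R] (hD : D.IsHermitian) :
    (D * D).trace = 0 ↔ D = 0 := by
  simpa only [hD.eq] using trace_conjTranspose_mul_self_eq_zero_iff (A := D)

end Trace

section ProjPerp

variable {ι K : Type*} [Fintype ι] [DecidableEq ι] [Field K]

def projPerp (ψ : ι → K) : Matrix ι ι K := 1 - (ψ ⬝ᵥ ψ)⁻¹ • vecMulVec ψ ψ

variable {ψ : ι → K}

theorem projPerp_mulVec_self (hψ : ψ ⬝ᵥ ψ ≠ 0) : projPerp ψ *ᵥ ψ = 0 := by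
  rw [projPerp, sub_mulVec, one_mulVec, smul_mulVec, vecMulVec_mulVec, op_smul_eq_smul,
    smul_smul, inv_mul_cancel₀ hψ, one_smul, sub_self]

theorem transpose_projPerp : (projPerp ψ)ᵀ = projPerp ψ := by
  rw [projPerp, transpose_sub, transpose_one, transpose_smul, transpose_vecMulVec]

theorem vecMul_projPerp_self (hψ : ψ ⬝ᵥ ψ ≠ 0) : ψ ᵥ* projPerp ψ = 0 := by
  rw [← mulVec_transpose, transpose_projPerp, projPerp_mulVec_self hψ]

theorem mul_projPerp_of_mulVec_eq_zero {A : Matrix ι ι K} (h : A *ᵥ ψ = 0) :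
    A * projPerp ψ = A := by
  rw [projPerp, mul_sub, mul_one, Matrix.mul_smul, mul_vecMulVec, h, zero_vecMulVec, smul_zero,
    sub_zero]

theorem projPerp_mul_of_vecMul_eq_zero {A : Matrix ι ι K} (h : ψ ᵥ* A = 0) :
    projPerp ψ * A = A := by
  rw [projPerp, sub_mul, one_mul, smul_mul, vecMulVec_mul, h, vecMulVec_zero, smul_zero, sub_zero]

theorem projPerp_mul_self (hψ : ψ ⬝ᵥ ψ ≠ 0) : projPerp ψ * projPerp ψ = projPerp ψ :=
  mul_projPerp_of_mulVec_eq_zero (projPerp_mulVec_self hψ)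

theorem trace_mul_projPerp_sandwich_sub {D : Matrix ι ι K} (hD : D *ᵥ ψ = 0) (hD' : ψ ᵥ* D = 0)
    (L : Matrix ι ι K) : (D * (projPerp ψ * L * projPerp ψ - L)).trace = 0 := by
  have hPDP : projPerp ψ * D * projPerp ψ = D := by
    rw [projPerp_mul_of_vecMul_eq_zero hD', mul_projPerp_of_mulVec_eq_zero hD]
  rw [mul_sub, trace_sub, ← Matrix.mul_assoc, ← Matrix.mul_assoc, trace_mul_cycle,
    ← Matrix.mul_assoc, hPDP, sub_self]

theorem trace_sq_sub_eq_add (hψ : ψ ⬝ᵥ ψ ≠ 0) (L : Matrix ι ι K) {A : Matrix ι ι K}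
    (hA : Aᵀ = A) (hAψ : A *ᵥ ψ = 0) :
    ((A - L) * (A - L)).trace =
      ((A - projPerp ψ * L * projPerp ψ) * (A - projPerp ψ * L * projPerp ψ)).trace +
      ((projPerp ψ * L * projPerp ψ - L) * (projPerp ψ * L * projPerp ψ - L)).trace := by
  set G := projPerp ψ * L * projPerp ψ
  have hD : (A - G) *ᵥ ψ = 0 := by
    rw [sub_mulVec, hAψ, ← mulVec_mulVec, projPerp_mulVec_self hψ, mulVec_zero, sub_self]
  have hD' : ψ ᵥ* (A - G) = 0 := by
    rw [vecMul_sub, ← mulVec_transpose, hA, hAψ, ← vecMul_vecMul, ← vecMul_vecMul,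
      vecMul_projPerp_self hψ, zero_vecMul, zero_vecMul, sub_self]
  calc ((A - L) * (A - L)).trace = (((A - G) + (G - L)) * ((A - G) + (G - L))).trace := by
        rw [sub_add_sub_cancel]
    _ = ((A - G) * (A - G)).trace + 2 * ((A - G) * (G - L)).trace
          + ((G - L) * (G - L)).trace := by
        rw [add_mul, mul_add, mul_add, trace_add, trace_add, trace_add,
          trace_mul_comm (G - L) (A - G)]
        ring
    _ = _ := by rw [trace_mul_projPerp_sandwich_sub hD hD' L]; ring

theorem trace_projPerp_mul_sq {L : Matrix ι ι K} (hL : Lᵀ = L) :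
    (projPerp ψ * L * (projPerp ψ * L)).trace = (L * L).trace
      - 2 * (ψ ⬝ᵥ ψ)⁻¹ * ((L *ᵥ ψ) ⬝ᵥ (L *ᵥ ψ)) + ((ψ ⬝ᵥ ψ)⁻¹ * (ψ ⬝ᵥ (L *ᵥ ψ))) ^ 2 := by
  have hPL : projPerp ψ * L = L - (ψ ⬝ᵥ ψ)⁻¹ • vecMulVec ψ (L *ᵥ ψ) := by
    rw [projPerp, sub_mul, one_mul, smul_mul, vecMulVec_mul, ← mulVec_transpose, hL]
  rw [hPL, sub_mul, mul_sub, mul_sub, Matrix.smul_mul, Matrix.mul_smul, Matrix.smul_mul,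
    Matrix.mul_smul, trace_sub, trace_sub, trace_sub, trace_smul, trace_smul, trace_smul,
    trace_smul, trace_mul_comm (vecMulVec _ _) L, mul_vecMulVec, vecMulVec_mul_vecMulVec,
    trace_vecMulVec, trace_vecMulVec, dotProduct_smul, smul_eq_mul, smul_eq_mul, smul_eq_mul,
    smul_eq_mul, dotProduct_comm (L *ᵥ ψ) ψ]
  ring

theorem trace_sq_projPerp_sandwich_sub (hψ : ψ ⬝ᵥ ψ ≠ 0) {L : Matrix ι ι K} (hL : Lᵀ = L) :
    ((projPerp ψ * L * projPerp ψ - L) * (projPerp ψ * L * projPerp ψ - L)).trace =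
      2 * ((L *ᵥ ψ) ⬝ᵥ (L *ᵥ ψ)) / (ψ ⬝ᵥ ψ) - ((ψ ⬝ᵥ (L *ᵥ ψ)) / (ψ ⬝ᵥ ψ)) ^ 2 := by
  rw [trace_sq_sandwich_sub_of_idempotent (projPerp_mul_self hψ), trace_projPerp_mul_sq hL]
  ring

variable [StarRing K]

theorem conjTranspose_projPerp (hψ : star ψ = ψ) : (projPerp ψ)ᴴ = projPerp ψ := by
  rw [projPerp, conjTranspose_sub, conjTranspose_one, conjTranspose_smul, conjTranspose_vecMulVec,
    star_inv₀, ← star_dotProduct_star, hψ]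

theorem trace_sq_projPerp_sandwich_sub_le [PartialOrder K] [StarOrderedRing K]
    (hψ : ψ ⬝ᵥ ψ ≠ 0) (hψ' : star ψ = ψ) {L A : Matrix ι ι K} (hL : Lᴴ = L)
    (hAT : Aᵀ = A) (hAH : Aᴴ = A) (hAψ : A *ᵥ ψ = 0) :
    ((projPerp ψ * L * projPerp ψ - L) * (projPerp ψ * L * projPerp ψ - L)).trace ≤
        ((A - L) * (A - L)).trace ∧
      (((A - L) * (A - L)).trace =
          ((projPerp ψ * L * projPerp ψ - L) * (projPerp ψ * L * projPerp ψ - L)).trace ↔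
        A = projPerp ψ * L * projPerp ψ) := by
  have hD : (A - projPerp ψ * L * projPerp ψ).IsHermitian := by
    rw [IsHermitian, conjTranspose_sub, conjTranspose_mul, conjTranspose_mul,
      conjTranspose_projPerp hψ', hL, hAH, Matrix.mul_assoc]
  rw [trace_sq_sub_eq_add hψ L hAT hAψ, add_eq_right, hD.trace_mul_self_eq_zero_iff, sub_eq_zero]
  exact ⟨le_add_of_nonneg_left hD.trace_mul_self_nonneg, Iff.rfl⟩

end ProjPerp

section Real

variable {ι : Type*} [Fintype ι]

theorem dotProduct_sq_le (x y : ι → ℝ) : (x ⬝ᵥ y) ^ 2 ≤ (x ⬝ᵥ x) * (y ⬝ᵥ y) := by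
  simpa only [dotProduct, sq] using Finset.sum_mul_sq_le_sq_mul_sq Finset.univ x y

theorem dotProduct_self_pos {x : ι → ℝ} (hx : x ≠ 0) : 0 < x ⬝ᵥ x :=
  (Finset.sum_nonneg fun i _ => mul_self_nonneg (x i)).lt_of_ne'
    (dotProduct_self_eq_zero.not.mpr hx)

end Real

end Matrix

theorem backwardError_bounds {s a b : ℝ} (hs : 0 < s) (hab : a ^ 2 ≤ s * b) :
    b / s ≤ 2 * b / s - (a / s) ^ 2 ∧ 2 * b / s - (a / s) ^ 2 ≤ 2 * b / s ∧
      (2 * b / s - (a / s) ^ 2 = 0 ↔ b = 0) := by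
  have hb : 0 ≤ b := nonneg_of_mul_nonneg_right ((sq_nonneg a).trans hab) hs
  have hle : (a / s) ^ 2 ≤ b / s := by
    rw [div_pow, sq s, ← div_div, div_le_div_iff_of_pos_right hs, div_le_iff₀ hs, mul_comm]
    exact hab
  have hbs : 0 ≤ b / s := div_nonneg hb hs.le
  rw [mul_div_assoc]
  refine ⟨by linarith, by linarith [sq_nonneg (a / s)], fun h => ?_, fun h => ?_⟩
  · have : b / s = 0 := by linarith
    simpa [hs.ne'] using this
  · have ha : a = 0 := by nlinarith [sq_nonneg a]
    simp [h, ha]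

theorem exists_comp_ofReal_of_star_eq {ι : Type*} {v : ι → ℂ} (hv : star v = v) :
    ∃ x : ι → ℝ, v = Complex.ofRealHom ∘ x :=
  ⟨fun i => (v i).re, funext fun i => (Complex.conj_eq_iff_re.mp (congrFun hv i)).symm⟩

theorem stmt_19 {n : ℕ} (L : Matrix (Fin n) (Fin n) ℂ)
    (hLsym : Lᵀ = L) (hLherm : Lᴴ = L)
    (ψ : Fin n → ℂ) (hψ : ψ ≠ 0) (hψreal : star ψ = ψ)
    (τ : ℂ)
    (hτ : τ = 2 * ((L *ᵥ ψ) ⬝ᵥ (L *ᵥ ψ)) / (ψ ⬝ᵥ ψ)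
            - ((ψ ⬝ᵥ (L *ᵥ ψ)) / (ψ ⬝ᵥ ψ)) ^ 2) :
    (∀ Ltil : Matrix (Fin n) (Fin n) ℂ,
      Ltilᵀ = Ltil → Ltilᴴ = Ltil → Ltil *ᵥ ψ = 0 →
      τ ≤ ((Ltil - L) * (Ltil - L)).trace ∧
      (((Ltil - L) * (Ltil - L)).trace = τ ↔
        Ltil = (1 - (ψ ⬝ᵥ ψ)⁻¹ • vecMulVec ψ ψ) * L *
               (1 - (ψ ⬝ᵥ ψ)⁻¹ • vecMulVec ψ ψ))) ∧
    ((L *ᵥ ψ) ⬝ᵥ (L *ᵥ ψ)) / (ψ ⬝ᵥ ψ) ≤ τ ∧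
    τ ≤ 2 * ((L *ᵥ ψ) ⬝ᵥ (L *ᵥ ψ)) / (ψ ⬝ᵥ ψ) ∧
    (τ = 0 ↔ L *ᵥ ψ = 0) := by
  have hLψreal : star (L *ᵥ ψ) = L *ᵥ ψ := by
    rw [star_mulVec, hLherm, hψreal, ← mulVec_transpose, hLsym]
  obtain ⟨x, hx⟩ := exists_comp_ofReal_of_star_eq hψreal
  obtain ⟨y, hy⟩ := exists_comp_ofReal_of_star_eq hLψreal
  have hx0 : x ≠ 0 := by rintro rfl; exact hψ (by simpa using hx)
  have hs : ψ ⬝ᵥ ψ = (x ⬝ᵥ x : ℝ) := by rw [hx, ← RingHom.map_dotProduct]; rfl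
  have ha : ψ ⬝ᵥ (L *ᵥ ψ) = (x ⬝ᵥ y : ℝ) := by rw [hy, hx, ← RingHom.map_dotProduct]; rfl
  have hb : (L *ᵥ ψ) ⬝ᵥ (L *ᵥ ψ) = (y ⬝ᵥ y : ℝ) := by rw [hy, ← RingHom.map_dotProduct]; rfl
  have hs0 : ψ ⬝ᵥ ψ ≠ 0 := by rw [hs]; exact_mod_cast (dotProduct_self_pos hx0).ne'
  obtain ⟨hlower, hupper, hzero⟩ :=
    backwardError_bounds (dotProduct_self_pos hx0) (dotProduct_sq_le x y)
  refine ⟨fun Ltil hT hH h0 => ?_, ?_, ?_, ?_⟩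
  · rw [hτ, ← trace_sq_projPerp_sandwich_sub hs0 hLsym]
    exact trace_sq_projPerp_sandwich_sub_le hs0 hψreal hLherm hT hH h0
  · rw [hτ, hs, ha, hb]; exact_mod_cast hlower
  · rw [hτ, hs, ha, hb]; exact_mod_cast hupper
  · have hy0 : Complex.ofRealHom ∘ y = 0 ↔ y = 0 :=
      (Complex.ofReal_injective.comp_left).eq_iff' (funext fun _ => Complex.ofReal_zero)
    rw [hτ, hs, ha, hb, hy, hy0, ← dotProduct_self_eq_zero, ← hzero]
    exact_mod_cast Iff.rfl
end
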